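/- Let A be a nontrivial algebra (|A| ≥ 2) with a unary operation ¬ and F ⊆ A. The matrix ⟨A,F⟩ is a reduced model of S_N (i.e., F is an S_N-filter and the Leibniz congruence Ω^A F is the identity) if and only if: (1) ¬¬a = a for all a ∈ A; (2) F = {a₀} for some a₀ ∈ A with a₀ ≠ ¬a₀; and (3) 2 ≤ |A| ≤ 3. -/

import Mathlib

/-- Formulas of the algebraic language with a single unary connective ¬,
built as the absolutely free algebra over a countably infinite set of variables. -/
inductive Fm : Type where
  | var : ℕ → Fm
  | neg : Fm → Fm

/-- The {¬}-fragment ⊢_N of classical propositional logic: Γ ⊢_N α iff every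
homomorphism h from Fm to the two-element algebra 2_¬ = ⟨{0,1},¬⟩ (¬0 = 1, ¬1 = 0)
with h[Γ] ⊆ {1} satisfies h(α) = 1. -/
def DerivN (Γ : Set Fm) (α : Fm) : Prop :=
  ∀ h : Fm → Bool, (∀ φ : Fm, h (Fm.neg φ) = !(h φ)) →
    (∀ γ ∈ Γ, h γ = true) → h α = true

/-- F ⊆ A is an S_N-filter of the algebra ⟨A, neg⟩ if for all Γ ∪ {α} ⊆ Fm with
Γ ⊢_N α and every homomorphism h : Fm → A, h[Γ] ⊆ F implies h(α) ∈ F. -/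
def IsSNFilter {A : Type*} (neg : A → A) (F : Set A) : Prop :=
  ∀ (Γ : Set Fm) (α : Fm), DerivN Γ α →
    ∀ h : Fm → A, (∀ φ : Fm, h (Fm.neg φ) = neg (h φ)) →
      (∀ γ ∈ Γ, h γ ∈ F) → h α ∈ F

/-- `Fig neg B` is the least S_N-filter of ⟨A, neg⟩ containing B
(the intersection of all S_N-filters containing B). -/
def Fig {A : Type*} (neg : A → A) (B : Set A) : Set A :=
  {a | ∀ F : Set A, IsSNFilter neg F → B ⊆ F → a ∈ F}

/-!
When `¬` is an involution, a formula in the variable `p` takes the value `a` or `¬a`, where `a`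
is the value of `p`. On the subalgebra `{a₀, ¬a₀} ≅ 2_¬` the matrix `⟨A, {a₀}⟩` therefore behaves
like `⟨2_¬, {1}⟩`, while a formula whose variable is sent outside it is never designated; sending
that outside part to either truth value in turn (`twoValued`) shows that such a formula is not a
consequence of designated premises.

Conversely, in a model of `S_N` membership in `F` is invariant under `¬¬`, so "`a` and `b` agree on
membership in `F`, and so do `¬a` and `¬b`" (`Indist`) is a congruence compatible with `F`. In a
reduced model an element is thus determined by this pair of truth values; explosion
`p, ¬p ⊢_N q` excludes the pair (true, true), and the remaining three give `|A| ≤ 3`.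
-/

open Function

namespace Fm

def eval {B : Type*} (n : B → B) (v : ℕ → B) : Fm → B
  | var k => v k
  | neg φ => n (eval n v φ)

end Fm

section Filter

variable {A : Type*} {neg : A → A} {F : Set A}

theorem IsSNFilter.eval_mem (hF : IsSNFilter neg F) {Γ : Set Fm} {α : Fm} (hΓα : DerivN Γ α)
    (v : ℕ → A) (hΓ : ∀ γ ∈ Γ, Fm.eval neg v γ ∈ F) : Fm.eval neg v α ∈ F :=
  hF Γ α hΓα _ (fun _ => rfl) hΓ

theorem IsSNFilter.neg_neg_mem_iff (hF : IsSNFilter neg F) (a : A) :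
    neg (neg a) ∈ F ↔ a ∈ F := by
  constructor <;> intro ha
  · refine hF.eval_mem (Γ := {(Fm.var 0).neg.neg}) (α := Fm.var 0) ?_ (fun _ => a) (by simpa)
    intro h hh hΓ
    simpa [hh] using hΓ _ rfl
  · refine hF.eval_mem (Γ := {Fm.var 0}) (α := (Fm.var 0).neg.neg) ?_ (fun _ => a) (by simpa)
    intro h hh hΓ
    simpa [hh] using hΓ _ rfl

theorem IsSNFilter.eq_univ_of_mem_of_neg_mem (hF : IsSNFilter neg F) {a : A} (ha : a ∈ F)
    (hna : neg a ∈ F) : F = Set.univ := by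
  refine Set.eq_univ_of_forall fun b => hF.eval_mem (Γ := {Fm.var 0, (Fm.var 0).neg})
    (α := Fm.var 1) ?_ (fun k => if k = 0 then a else b) (by simp [Fm.eval, ha, hna])
  intro h hh hΓ
  have hp := hΓ (Fm.var 0) (by simp)
  have hnp := hΓ (Fm.var 0).neg (by simp)
  simp [hh, hp] at hnp

end Filter

section Reduced

variable {A : Type*} (neg : A → A) (F : Set A)

def Indist (a b : A) : Prop :=
  (a ∈ F ↔ b ∈ F) ∧ (neg a ∈ F ↔ neg b ∈ F)

def IsReducedMatrix : Prop :=
  ∀ θ : A → A → Prop, Equivalence θ → (∀ a b : A, θ a b → θ (neg a) (neg b)) →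
    (∀ a b : A, θ a b → a ∈ F → b ∈ F) → ∀ a b : A, θ a b → a = b

variable {neg F}

theorem isReducedMatrix_of_indist (h : ∀ a b, Indist neg F a b → a = b) :
    IsReducedMatrix neg F := by
  intro θ hθ hcong hcomp a b hab
  have hba := hθ.symm hab
  exact h a b ⟨⟨hcomp a b hab, hcomp b a hba⟩,
    ⟨hcomp _ _ (hcong a b hab), hcomp _ _ (hcong b a hba)⟩⟩

theorem IsReducedMatrix.eq_of_indist (hR : IsReducedMatrix neg F)
    (hF : ∀ a, neg (neg a) ∈ F ↔ a ∈ F) {a b : A} (hab : Indist neg F a b) : a = b := by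
  refine hR (Indist neg F) ?_ (fun a b h => ⟨h.2, by rw [hF, hF]; exact h.1⟩)
    (fun _ _ h => h.1.1) a b hab
  exact ⟨fun _ => ⟨Iff.rfl, Iff.rfl⟩, fun h => ⟨h.1.symm, h.2.symm⟩,
    fun h h' => ⟨h.1.trans h'.1, h.2.trans h'.2⟩⟩

theorem indist_singleton_iff (hinv : Involutive neg) {a₀ a b : A} :
    Indist neg {a₀} a b ↔ (a = a₀ ↔ b = a₀) ∧ (a = neg a₀ ↔ b = neg a₀) := by
  simp only [Indist, Set.mem_singleton_iff, hinv.eq_iff]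

theorem forall_indist_singleton_imp_eq_iff (hinv : Involutive neg) (a₀ : A) :
    (∀ a b, Indist neg {a₀} a b → a = b) ↔ ({a₀, neg a₀}ᶜ : Set A).Subsingleton := by
  simp only [indist_singleton_iff hinv]
  constructor
  · intro h a ha b hb
    simp only [Set.mem_compl_iff, Set.mem_insert_iff, Set.mem_singleton_iff, not_or] at ha hb
    exact h a b ⟨iff_of_false ha.1 hb.1, iff_of_false ha.2 hb.2⟩
  · intro h a b ⟨h₁, h₂⟩
    by_cases ha₁ : a = a₀
    · rw [ha₁, h₁.1 ha₁]
    by_cases ha₂ : a = neg a₀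
    · rw [ha₂, h₂.1 ha₂]
    exact h (by simp [ha₁, ha₂]) (by simp [mt h₁.2 ha₁, mt h₂.2 ha₂])

end Reduced

theorem Set.subsingleton_compl_pair_iff {α : Type*} {a b : α} (hab : a ≠ b) :
    ({a, b}ᶜ : Set α).Subsingleton ↔ Finite α ∧ Nat.card α ≤ 3 := by
  constructor
  · intro h
    have : Finite α := by
      have := (Set.toFinite {a, b}).union h.finite
      rwa [Set.union_compl_self, Set.finite_univ_iff] at this
    refine ⟨this, ?_⟩
    rw [← Set.ncard_add_ncard_compl {a, b}, Set.ncard_pair hab]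
    have := Set.ncard_le_one_iff_subsingleton.2 h
    omega
  · rintro ⟨_, h⟩
    rw [← Set.ncard_add_ncard_compl {a, b}, Set.ncard_pair hab] at h
    exact Set.ncard_le_one_iff_subsingleton.1 (by omega)

section Soundness

variable {A : Type*} {neg : A → A} {a₀ : A}

open Classical in
noncomputable def twoValued (neg : A → A) (a₀ : A) (w : Bool) (a : A) : Bool :=
  if a = a₀ then true else if a = neg a₀ then false else w

theorem neg_mem_pair_iff (hinv : Involutive neg) {a : A} :
    neg a ∈ ({a₀, neg a₀} : Set A) ↔ a ∈ ({a₀, neg a₀} : Set A) := by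
  simp only [Set.mem_insert_iff, Set.mem_singleton_iff, hinv.eq_iff, hinv a₀]
  exact or_comm

theorem eval_twoValued_of_mem {h : Fm → A} (hh : ∀ φ, h (Fm.neg φ) = neg (h φ))
    (hinv : Involutive neg) (hne : a₀ ≠ neg a₀) (w : Bool) :
    ∀ φ, h φ ∈ ({a₀, neg a₀} : Set A) →
      Fm.eval not (fun k => twoValued neg a₀ w (h (.var k))) φ = twoValued neg a₀ w (h φ)
  | .var _, _ => rfl
  | .neg φ, hφ => by
    rw [hh] at hφ ⊢
    have hφ' := (neg_mem_pair_iff hinv).1 hφ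
    rw [Fm.eval, eval_twoValued_of_mem hh hinv hne w φ hφ']
    obtain hφ' | hφ' : h φ = a₀ ∨ h φ = neg a₀ := hφ'
    · simp [twoValued, hφ', hne.symm]
    · simp [twoValued, hφ', hinv a₀, hne.symm]

theorem eval_twoValued_ne_of_not_mem {h : Fm → A} (hh : ∀ φ, h (Fm.neg φ) = neg (h φ))
    (hinv : Involutive neg) :
    ∀ φ, h φ ∉ ({a₀, neg a₀} : Set A) →
      Fm.eval not (fun k => twoValued neg a₀ true (h (.var k))) φ ≠
        Fm.eval not (fun k => twoValued neg a₀ false (h (.var k))) φ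
  | .var _, hφ => by
    simp only [Set.mem_insert_iff, Set.mem_singleton_iff, not_or] at hφ
    simp [Fm.eval, twoValued, hφ.1, hφ.2]
  | .neg φ, hφ => by
    rw [hh, neg_mem_pair_iff hinv] at hφ
    simpa [Fm.eval] using eval_twoValued_ne_of_not_mem hh hinv φ hφ

theorem isSNFilter_singleton (hinv : Involutive neg) (hne : a₀ ≠ neg a₀) :
    IsSNFilter neg {a₀} := by
  intro Γ α hΓα h hh (hΓ : ∀ γ ∈ Γ, h γ = a₀)
  have hα : ∀ w, Fm.eval not (fun k => twoValued neg a₀ w (h (.var k))) α = true := by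
    intro w
    refine hΓα _ (fun _ => rfl) fun γ hγ => ?_
    rw [eval_twoValued_of_mem hh hinv hne w γ (by simp [hΓ γ hγ]), hΓ γ hγ]
    simp [twoValued]
  have hmem : h α ∈ ({a₀, neg a₀} : Set A) :=
    by_contra fun hα' => eval_twoValued_ne_of_not_mem hh hinv α hα' (by rw [hα, hα])
  have := hα true
  rw [eval_twoValued_of_mem hh hinv hne true α hmem] at this
  obtain hα' | hα' : h α = a₀ ∨ h α = neg a₀ := hmem
  · exact hα'
  · simp [twoValued, hα', hne.symm] at this

end Soundness

section Completeness

variable {A : Type*} {neg : A → A} {F : Set A}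
  (hF : IsSNFilter neg F) (hR : IsReducedMatrix neg F)
include hF hR

theorem IsSNFilter.involutive_of_isReducedMatrix : Involutive neg := fun a =>
  hR.eq_of_indist hF.neg_neg_mem_iff ⟨hF.neg_neg_mem_iff a, hF.neg_neg_mem_iff (neg a)⟩

theorem IsSNFilter.exists_eq_singleton_of_isReducedMatrix [Nontrivial A] :
    ∃ a₀, F = {a₀} ∧ a₀ ≠ neg a₀ := by
  have hind : ∀ {a b}, Indist neg F a b → a = b := hR.eq_of_indist hF.neg_neg_mem_iff
  obtain ⟨x, y, hxy⟩ := exists_pair_ne A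
  have hF_ne_univ : F ≠ Set.univ := fun h => hxy (hind (by simp [Indist, h]))
  obtain ⟨a₀, ha₀⟩ : F.Nonempty :=
    Set.nonempty_iff_ne_empty.2 fun h => hxy (hind (by simp [Indist, h]))
  have hneg : ∀ a ∈ F, neg a ∉ F := fun a ha hna =>
    hF_ne_univ (hF.eq_univ_of_mem_of_neg_mem ha hna)
  refine ⟨a₀, Set.eq_singleton_iff_unique_mem.2 ⟨ha₀, fun b hb => hind ?_⟩,
    fun h => hneg a₀ ha₀ (h ▸ ha₀)⟩
  exact ⟨iff_of_true hb ha₀, iff_of_false (hneg b hb) (hneg a₀ ha₀)⟩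

end Completeness

/-- For a nontrivial algebra ⟨A, neg⟩, the matrix ⟨A, F⟩ is a reduced model of
S_N (F is an S_N-filter and the Leibniz congruence — the largest congruence
compatible with F, equivalently every congruence compatible with F — is the
identity) iff (1) ¬¬a = a for all a, (2) F = {a₀} with a₀ ≠ ¬a₀, and
(3) 2 ≤ |A| ≤ 3. -/
theorem stmt8 {A : Type*} [Nontrivial A] (neg : A → A) (F : Set A) :
    (IsSNFilter neg F ∧
      ∀ θ : A → A → Prop, Equivalence θ → (∀ a b : A, θ a b → θ (neg a) (neg b)) →
        (∀ a b : A, θ a b → a ∈ F → b ∈ F) → ∀ a b : A, θ a b → a = b) ↔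
    ((∀ a : A, neg (neg a) = a) ∧
     (∃ a₀ : A, F = {a₀} ∧ a₀ ≠ neg a₀) ∧
     (2 ≤ Nat.card A ∧ Nat.card A ≤ 3)) := by
  show IsSNFilter neg F ∧ IsReducedMatrix neg F ↔ _
  constructor
  · rintro ⟨hF, hR⟩
    have hinv := hF.involutive_of_isReducedMatrix hR
    obtain ⟨a₀, rfl, hne⟩ := hF.exists_eq_singleton_of_isReducedMatrix hR
    have hsub := (forall_indist_singleton_imp_eq_iff hinv a₀).1
      fun _ _ => hR.eq_of_indist hF.neg_neg_mem_iff
    obtain ⟨_, hcard⟩ := (Set.subsingleton_compl_pair_iff hne).1 hsub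
    exact ⟨hinv, ⟨a₀, rfl, hne⟩, Finite.one_lt_card, hcard⟩
  · rintro ⟨hinv, ⟨a₀, rfl, hne⟩, hcard₂, hcard₃⟩
    have : Finite A := Nat.finite_of_card_ne_zero (by omega)
    refine ⟨isSNFilter_singleton hinv hne, isReducedMatrix_of_indist ?_⟩
    exact (forall_indist_singleton_imp_eq_iff hinv a₀).2
      ((Set.subsingleton_compl_pair_iff hne).2 ⟨this, hcard₃⟩)
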